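/- arXiv:1806.01091 — 2 statements merged into one kernel-verified Lean document; each statement's English description precedes it below -/
import Mathlib

section
/- Let p > 0, d ≥ 1 an integer with p·d < 1, μ = p·d, and q = 1 − p/(1 − p(d−1)). Then for integer lag τ with 1 ≤ τ ≤ d, the quantity E[γ_{t}γ_{t+τ}] := p(d−τ) + p·(τ(1−q) + q^{τ+1} − q)/(1−q) satisfies: the correlation (E[γ_{t}γ_{t+τ}] − μ²)/(μ − μ²) equals (q^τ + μ − 1)/μ. -/
/-! With `A = 1 − p(d−1)` one has `1 − q = p/A`, hence `p·q = (1 − μ)(1 − q)`. Summing the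
geometric series hidden in `E` then gives `E = μ − (1 − μ)(1 − q^τ)`, and the common factor
`1 − μ` cancels against the variance `μ − μ²`. -/

namespace Traffic

lemma mul_idle_prob_eq (p D q : ℝ) (hA : 1 - p * (D - 1) ≠ 0)
    (hq : q = 1 - p / (1 - p * (D - 1))) :
    p * q = (1 - p * D) * (1 - q) := by
  subst hq
  field_simp
  ring

lemma one_sub_idle_prob_ne_zero (p D q : ℝ) (hp : p ≠ 0)
    (hpq : p * q = (1 - p * D) * (1 - q)) : 1 - q ≠ 0 := by
  intro h
  rw [h, mul_zero, mul_eq_zero] at hpq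
  rcases hpq with hp0 | rfl
  · exact hp hp0
  · norm_num at h

/-- `E` rewritten through the geometric sum `q + q² + ⋯ + q^τ = q(1 − q^τ)/(1 − q)`. -/
lemma second_moment_eq (p D q : ℝ) (τ : ℕ) (hq : 1 - q ≠ 0)
    (hpq : p * q = (1 - p * D) * (1 - q)) :
    p * (D - τ) + p * (τ * (1 - q) + q ^ (τ + 1) - q) / (1 - q)
      = p * D - (1 - p * D) * (1 - q ^ τ) := by
  field_simp
  linear_combination (q ^ τ - 1) * hpq

lemma correlation_eq (μ x : ℝ) (hμ0 : μ ≠ 0) (hμ1 : μ ≠ 1) :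
    (μ - (1 - μ) * (1 - x) - μ ^ 2) / (μ - μ ^ 2) = (x + μ - 1) / μ := by
  have h1μ : 1 - μ ≠ 0 := sub_ne_zero.mpr hμ1.symm
  have hvar : μ - μ ^ 2 = μ * (1 - μ) := by ring
  rw [hvar, div_eq_div_iff (mul_ne_zero hμ0 h1μ) hμ0]
  ring

end Traffic

open Traffic in
theorem traffic_correlation_simplified_general
    (p : ℝ) (d τ : ℕ) (hp : 0 < p) (hd : 1 ≤ d)
    (hpd : p * d < 1)
    (μ q E : ℝ)
    (hμ : μ = p * d)
    (hq : q = 1 - p / (1 - p * (d - 1)))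
    (hE : E = p * ((d : ℝ) - τ) + p * ((τ : ℝ) * (1 - q) + q ^ (τ + 1) - q) / (1 - q)) :
    (E - μ ^ 2) / (μ - μ ^ 2) = (q ^ τ + μ - 1) / μ := by
  have hA : 1 - p * ((d : ℝ) - 1) ≠ 0 := by linarith
  have hpq := mul_idle_prob_eq p d q hA hq
  have hE' : E = μ - (1 - μ) * (1 - q ^ τ) := by
    rw [hE, hμ, second_moment_eq p d q τ (one_sub_idle_prob_ne_zero p d q hp.ne' hpq) hpq]
  have hμ0 : μ ≠ 0 := by
    rw [hμ]
    exact mul_ne_zero hp.ne' (by exact_mod_cast (Nat.one_le_iff_ne_zero.mp hd))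
  rw [hE', correlation_eq μ (q ^ τ) hμ0 (by rw [hμ]; exact hpd.ne)]

/-- Traffic-only interference correlation (case `(0,0,2)`), for lags not exceeding the
message length: with `μ = p·d`, `q = 1 − p/(1 − p(d−1))` and
`E[γ_t γ_{t+τ}] = p(d−τ) + p(τ(1−q) + q^{τ+1} − q)/(1−q)`, the correlation
`(E[γ_t γ_{t+τ}] − μ²)/(μ − μ²)` equals `(q^τ + μ − 1)/μ`. -/
theorem traffic_correlation_simplified
    (p : ℝ) (d τ : ℕ) (hp : 0 < p) (hd : 1 ≤ d) (hτ1 : 1 ≤ τ) (hτd : τ ≤ d)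
    (hpd : p * d < 1)
    (μ q E : ℝ)
    (hμ : μ = p * d)
    (hq : q = 1 - p / (1 - p * (d - 1)))
    (hE : E = p * ((d : ℝ) - τ) + p * ((τ : ℝ) * (1 - q) + q ^ (τ + 1) - q) / (1 - q)) :
    (E - μ ^ 2) / (μ - μ ^ 2) = (q ^ τ + μ - 1) / μ :=
  traffic_correlation_simplified_general p d τ hp hd hpd μ q E hμ hq hE
end

section
/- Let p > 0, d ≥ 2 with pd < 1, q = 1 − p/(1−p(d−1)), μ = pd. For fixed integer τ with 1 ≤ τ < d, the limit as p → 0⁺ of ( p(d−τ) + p(τ(1−q)+q^{τ+1}−q)/(1−q) − μ² ) / (μ − μ²) equals (d−τ)/d. -/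
open Filter Topology

lemma key_identity (d τ : ℕ) (p q : ℝ) (hq : q ≠ 1) (hp : p ≠ 0)
    (hd0 : (d:ℝ) ≠ 0) (hpd : 1 - p * d ≠ 0) :
    (p * ((d : ℝ) - τ) +
        p * ((τ : ℝ) * (1 - q) + q ^ (τ + 1) - q) / (1 - q) -
        (p * d) ^ 2) / (p * d - (p * d) ^ 2)
      = ((d:ℝ) - q * (∑ i ∈ Finset.range τ, q ^ i) - p * d ^ 2) / ((d:ℝ) * (1 - p * d)) := by
  have h1 : q ^ (τ + 1) = q * ((∑ i ∈ Finset.range τ, q ^ i) * (q - 1)) + q := by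
    rw [geom_sum_mul, pow_succ]; ring
  have hq' : 1 - q ≠ 0 := sub_ne_zero.mpr (Ne.symm hq)
  have hnum : p * ((d : ℝ) - τ) +
        p * ((τ : ℝ) * (1 - q) + q ^ (τ + 1) - q) / (1 - q) -
        (p * d) ^ 2
      = p * ((d:ℝ) - q * (∑ i ∈ Finset.range τ, q ^ i) - p * d ^ 2) := by
    rw [h1]
    field_simp
    ring
  rw [hnum, show p * (d:ℝ) - (p * d) ^ 2 = p * ((d:ℝ) * (1 - p * d)) by ring,
    mul_div_mul_left _ _ hp]

/-- Low-traffic limit of the traffic-only auto-correlation (case `(0,0,2)`): with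
`q(p) = 1 − p/(1 − p(d−1))`, `μ(p) = p·d`, fixed message length `d ≥ 2` and fixed lag
`1 ≤ τ < d`, the auto-correlation tends to `(d−τ)/d` as `p → 0⁺`. -/
theorem traffic_correlation_low_traffic_limit
    (d τ : ℕ) (hd : 2 ≤ d) (hτ1 : 1 ≤ τ) (hτd : τ < d) :
    Tendsto
      (fun p : ℝ =>
        (p * ((d : ℝ) - τ) +
            p * ((τ : ℝ) * (1 - (1 - p / (1 - p * ((d : ℝ) - 1)))) +
                  (1 - p / (1 - p * ((d : ℝ) - 1))) ^ (τ + 1) -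
                  (1 - p / (1 - p * ((d : ℝ) - 1)))) /
              (1 - (1 - p / (1 - p * ((d : ℝ) - 1)))) -
            (p * d) ^ 2) /
          (p * d - (p * d) ^ 2))
      (nhdsWithin 0 (Set.Ioi 0)) (nhds (((d : ℝ) - τ) / d)) := by
  have hdpos : (0:ℝ) < d := by positivity
  have hd0 : (d:ℝ) ≠ 0 := ne_of_gt hdpos
  set g : ℝ → ℝ := fun p =>
    ((d:ℝ) - (1 - p / (1 - p * ((d : ℝ) - 1))) *
        (∑ i ∈ Finset.range τ, (1 - p / (1 - p * ((d : ℝ) - 1))) ^ i) - p * d ^ 2) /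
      ((d:ℝ) * (1 - p * d)) with hg
  have hQcont : ContinuousAt (fun p : ℝ => 1 - p / (1 - p * ((d:ℝ) - 1))) 0 := by
    apply ContinuousAt.sub continuousAt_const
    exact ContinuousAt.div continuousAt_id (by fun_prop) (by norm_num)
  have hcont : ContinuousAt g 0 := by
    apply ContinuousAt.div
    · apply ContinuousAt.sub
      apply ContinuousAt.sub continuousAt_const
      · exact hQcont.mul
          (((continuous_finset_sum _ fun i _ => continuous_pow i).continuousAt).comp hQcont)
      · fun_prop
    · fun_prop
    · norm_num [hd0]
  have hval : g 0 = ((d : ℝ) - τ) / d := by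
    simp [hg]
  have hTg : Tendsto g (nhdsWithin 0 (Set.Ioi 0)) (nhds (((d : ℝ) - τ) / d)) := by
    rw [← hval]
    exact hcont.continuousWithinAt.tendsto
  refine hTg.congr' ?_
  filter_upwards [Ioo_mem_nhdsGT_of_mem
    (⟨le_refl (0:ℝ), by positivity⟩ : (0:ℝ) ∈ Set.Ico 0 (1/(d:ℝ)))] with p hp
  obtain ⟨hp0, hp1⟩ := hp
  have hpd : p * d < 1 := by
    have := mul_lt_mul_of_pos_right hp1 hdpos
    rwa [one_div, inv_mul_cancel₀ hd0] at this
  have hs : 0 < 1 - p * ((d:ℝ) - 1) := by nlinarith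
  have hqne : (1 - p / (1 - p * ((d : ℝ) - 1))) ≠ 1 := by
    have h2 : p / (1 - p * ((d:ℝ)-1)) ≠ 0 := by positivity
    intro h; apply h2; linarith
  rw [hg]
  exact (key_identity d τ p _ hqne (ne_of_gt hp0) hd0 (by linarith)).symm
end
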